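/- arXiv:2407.16502 — 2 statements merged into one kernel-verified Lean document; each statement's English description precedes it below -/
import Mathlib

section
/- Let m ∈ ℕ, let β > 0, let H : ℝ^m × ℝ → ℝ be measurable, and let T : ℝ × ℝ^m → ℝ be such that for every a ∈ ℝ^m the map x ↦ T(x, a) is a continuously differentiable bijection of ℝ whose derivative is everywhere nonzero, and denote by T_a^{-1} its inverse. Assume that for every x₀ ∈ ℝ the quantity Z̃(x₀) := ∫_{ℝ^m} exp(−β · H(a, T(x₀, a))) da satisfies 0 < Z̃(x₀) < ∞, and let ν be a probability measure on ℝ with Lebesgue density p₀. Define the mixture measure L on ℝ^m × ℝ as the bind of ν with the kernel x₀ ↦ pushforward, under a ↦ (a, T(x₀, a)), of the probability measure on ℝ^m with Lebesgue density a ↦ exp(−β · H(a, T(x₀, a))) / Z̃(x₀). Then L is absolutely continuous with respect to Lebesgue measure on ℝ^m × ℝ, with density (a, b) ↦ p₀(x*) · exp(−β · H(a, b)) / ( |∂_x T(x, a)|_{x = x*}| · Z̃(x*) ), where x* := T_a^{-1}(b). -/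
open MeasureTheory Filter Set

lemma my_lintegral_image_eq_lintegral_abs_deriv_mul {s : Set ℝ} {f f' : ℝ → ℝ}
    (hs : MeasurableSet s) (hf' : ∀ x ∈ s, HasDerivWithinAt f (f' x) s x)
    (hf : Set.InjOn f s) (g : ℝ → ENNReal) :
    ∫⁻ x in f '' s, g x = ∫⁻ x in s, ENNReal.ofReal |f' x| * g (f x) := by
  simpa only [ContinuousLinearMap.det_toSpanSingleton] using
    lintegral_image_eq_lintegral_abs_det_fderiv_mul volume hs
      (fun x hx => (hf' x hx).hasFDerivWithinAt) hf g

lemma my_measurable_deriv_param {α : Type*} [MeasurableSpace α]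
    (T : ℝ → α → ℝ) (hT : Measurable (fun p : ℝ × α => T p.1 p.2))
    (hdiff : ∀ a x, DifferentiableAt ℝ (fun x => T x a) x) :
    Measurable (fun p : α × ℝ => deriv (fun x => T x p.1) p.2) := by
  have key : ∀ p : α × ℝ, Tendsto (fun n : ℕ =>
      (T (p.2 + (1:ℝ)/(n+1)) p.1 - T p.2 p.1) * (n+1)) atTop
      (nhds (deriv (fun x => T x p.1) p.2)) := by
    intro p
    have h := (hdiff p.1 p.2).hasDerivAt
    rw [hasDerivAt_iff_tendsto_slope] at h
    have hseq : Tendsto (fun n : ℕ => p.2 + (1:ℝ)/(n+1)) atTop (nhdsWithin p.2 {p.2}ᶜ) := by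
      apply tendsto_nhdsWithin_of_tendsto_nhds_of_eventually_within
      · have : Tendsto (fun n : ℕ => (1:ℝ)/(n+1)) atTop (nhds 0) :=
          tendsto_one_div_add_atTop_nhds_zero_nat
        simpa using (tendsto_const_nhds.add this)
      · filter_upwards with n
        simp only [Set.mem_compl_iff, Set.mem_singleton_iff]
        intro hcon
        have : (1:ℝ)/(n+1) = 0 := by linarith
        have hn : (0:ℝ) < 1/(n+1) := by positivity
        linarith
    have := h.comp hseq
    convert this using 2 with n
    simp only [Function.comp_apply, slope_def_field]
    have hn : (0:ℝ) < 1/(n+1) := by positivity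
    rw [show p.2 + 1/(n+1:ℝ) - p.2 = 1/(n+1) by ring, one_div, div_inv_eq_mul]
  apply measurable_of_tendsto_metrizable (f := fun n (p : α × ℝ) =>
      (T (p.2 + (1:ℝ)/(n+1)) p.1 - T p.2 p.1) * (n+1))
  · intro n
    exact (((hT.comp ((measurable_snd.add_const _).prodMk measurable_fst)).sub
      (hT.comp (measurable_snd.prodMk measurable_fst))).mul measurable_const)
  · exact tendsto_pi_nhds.2 key

lemma my_measurable_Tinv (m : ℕ) (T : ℝ → (Fin m → ℝ) → ℝ)
    (hT : Measurable (fun p : ℝ × (Fin m → ℝ) => T p.1 p.2))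
    (hTbij : ∀ a, Function.Bijective (fun x => T x a))
    (Tinv : (Fin m → ℝ) → ℝ → ℝ)
    (hTinvL : ∀ a, Function.LeftInverse (Tinv a) (fun x => T x a))
    (hTinvR : ∀ a, Function.RightInverse (Tinv a) (fun x => T x a)) :
    Measurable (fun p : (Fin m → ℝ) × ℝ => Tinv p.1 p.2) := by
  set Φ : (Fin m → ℝ) × ℝ → (Fin m → ℝ) × ℝ := fun p => (p.1, T p.2 p.1) with hΦdef
  have hΦmeas : Measurable Φ :=
    measurable_fst.prodMk (hT.comp (measurable_snd.prodMk measurable_fst))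
  have hΦinj : Function.Injective Φ := by
    rintro ⟨a, x⟩ ⟨a', x'⟩ h
    simp only [hΦdef, Prod.mk.injEq] at h
    obtain ⟨rfl, h2⟩ := h
    exact Prod.ext rfl ((hTbij a).1 h2)
  have hemb : MeasurableEmbedding Φ := hΦmeas.measurableEmbedding hΦinj
  set Ψ : (Fin m → ℝ) × ℝ → (Fin m → ℝ) × ℝ := fun p => (p.1, Tinv p.1 p.2) with hΨdef
  have hΦΨ : ∀ p, Φ (Ψ p) = p := by
    intro p; simp only [hΦdef, hΨdef]; exact Prod.ext rfl (hTinvR p.1 p.2)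
  have hΨΦ : ∀ p, Ψ (Φ p) = p := by
    intro p; simp only [hΦdef, hΨdef]; exact Prod.ext rfl (hTinvL p.1 p.2)
  have hΨmeas : Measurable Ψ := by
    intro u hu
    have : Ψ ⁻¹' u = Φ '' u := by
      ext p
      constructor
      · intro hp; exact ⟨Ψ p, hp, hΦΨ p⟩
      · rintro ⟨q, hq, rfl⟩; simpa [Set.mem_preimage, hΨΦ q] using hq
    rw [this]
    exact hemb.measurableSet_image.2 hu
  exact measurable_snd.comp hΨmeas

/-- The density formula from the proof of Proposition 1 (case `d_x = 1`):
the marginal prior `L` of the Dirac-kernel generalized physics-informed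
conditional prior, after integrating out the auxiliary initial state, is
absolutely continuous with respect to Lebesgue measure, with density
`(a, b) ↦ p₀(x*) · exp(−β H(a, b)) / (|∂ₓ T(x, a)|_{x = x*}| · Z̃(x*))`,
where `x* = T_a⁻¹(b)`. -/
theorem dirac_kernel_mixture_density_formula
    (m : ℕ) (β : ℝ) (hβ : 0 < β)
    (H : (Fin m → ℝ) × ℝ → ℝ) (hH : Measurable H)
    (T : ℝ → (Fin m → ℝ) → ℝ)
    (hT : Measurable (fun p : ℝ × (Fin m → ℝ) => T p.1 p.2))
    (hTsmooth : ∀ a, ContDiff ℝ 1 (fun x => T x a))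
    (hTbij : ∀ a, Function.Bijective (fun x => T x a))
    (hT' : ∀ a x, deriv (fun x => T x a) x ≠ 0)
    (Tinv : (Fin m → ℝ) → ℝ → ℝ)
    (hTinvL : ∀ a, Function.LeftInverse (Tinv a) (fun x => T x a))
    (hTinvR : ∀ a, Function.RightInverse (Tinv a) (fun x => T x a))
    (Z : ℝ → ℝ)
    (hZ : ∀ x₀, Z x₀ = ∫ a : Fin m → ℝ, Real.exp (-β * H (a, T x₀ a)))
    (hZpos : ∀ x₀, 0 < Z x₀)
    (hZfin : ∀ x₀,
      Integrable (fun a : Fin m → ℝ => Real.exp (-β * H (a, T x₀ a))))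
    (ν : Measure ℝ) [IsProbabilityMeasure ν]
    (p₀ : ℝ → ℝ) (hp₀ : Measurable p₀)
    (hν : ν = volume.withDensity (fun x₀ => ENNReal.ofReal (p₀ x₀)))
    (μ : ℝ → Measure (Fin m → ℝ))
    (hμ : ∀ x₀, μ x₀ = volume.withDensity
      (fun a => ENNReal.ofReal (Real.exp (-β * H (a, T x₀ a)) / Z x₀)))
    (L : Measure ((Fin m → ℝ) × ℝ))
    (hL : L = ν.bind fun x₀ => (μ x₀).map fun a => (a, T x₀ a)) :
    L ≪ (volume : Measure ((Fin m → ℝ) × ℝ)) ∧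
      L = (volume : Measure ((Fin m → ℝ) × ℝ)).withDensity
        (fun p => ENNReal.ofReal
          (p₀ (Tinv p.1 p.2) * Real.exp (-β * H p) /
            (|deriv (fun x => T x p.1) (Tinv p.1 p.2)| * Z (Tinv p.1 p.2)))) := by
  classical
  set F : (Fin m → ℝ) × ℝ → ENNReal := fun p => ENNReal.ofReal
      (p₀ (Tinv p.1 p.2) * Real.exp (-β * H p) /
        (|deriv (fun x => T x p.1) (Tinv p.1 p.2)| * Z (Tinv p.1 p.2))) with hFdef
  suffices hmain : L = volume.withDensity F by
    exact ⟨hmain ▸ withDensity_absolutelyContinuous _ _, hmain⟩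
  -- measurability preliminaries
  have hTa : ∀ x₀, Measurable (fun a : Fin m → ℝ => T x₀ a) := fun x₀ =>
    hT.comp (measurable_const.prodMk measurable_id)
  have hHT : Measurable (fun q : ℝ × (Fin m → ℝ) =>
      Real.exp (-β * H (q.2, T q.1 q.2))) :=
    Real.measurable_exp.comp (measurable_const.mul
      (hH.comp (measurable_snd.prodMk hT)))
  have hZmeas : Measurable Z := by
    have h := hHT.stronglyMeasurable.integral_prod_right' (ν := (volume : Measure (Fin m → ℝ)))
    have hZeq : Z = fun x₀ => ∫ a : Fin m → ℝ, Real.exp (-β * H (a, T x₀ a)) :=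
      funext hZ
    rw [hZeq]
    exact h.measurable
  have hTinvMeas : Measurable (fun p : (Fin m → ℝ) × ℝ => Tinv p.1 p.2) :=
    my_measurable_Tinv m T hT hTbij Tinv hTinvL hTinvR
  have hDmeas : Measurable (fun p : (Fin m → ℝ) × ℝ => deriv (fun x => T x p.1) p.2) :=
    my_measurable_deriv_param T hT
      (fun a x => ((hTsmooth a).differentiable one_ne_zero).differentiableAt)
  have hFmeas : Measurable F := by
    apply ENNReal.measurable_ofReal.comp
    apply Measurable.div
    · exact (hp₀.comp hTinvMeas).mul
        (Real.measurable_exp.comp (measurable_const.mul hH))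
    · exact ((hDmeas.comp (measurable_fst.prodMk hTinvMeas)).abs).mul
        (hZmeas.comp hTinvMeas)
  -- the kernel evaluated on sets
  have key : ∀ (t : Set ((Fin m → ℝ) × ℝ)), MeasurableSet t → ∀ x₀ : ℝ,
      ((μ x₀).map (fun a => (a, T x₀ a))) t
        = ∫⁻ a, ENNReal.ofReal (Real.exp (-β * H (a, T x₀ a)) / Z x₀)
            * t.indicator 1 (a, T x₀ a) := by
    intro t ht x₀
    have hg : Measurable (fun a : Fin m → ℝ => (a, T x₀ a)) :=
      measurable_id.prodMk (hTa x₀)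
    rw [hμ x₀, Measure.map_apply hg ht, withDensity_apply _ (hg ht),
      ← lintegral_indicator (hg ht)]
    congr 1
    funext a
    simp only [Set.indicator_apply, Set.mem_preimage]
    by_cases ha : (a, T x₀ a) ∈ t
    · simp [ha]
    · simp [ha]
  have hGmeas : ∀ (t : Set ((Fin m → ℝ) × ℝ)), MeasurableSet t →
      Measurable (fun q : ℝ × (Fin m → ℝ) =>
        ENNReal.ofReal (Real.exp (-β * H (q.2, T q.1 q.2)) / Z q.1)
          * t.indicator 1 (q.2, T q.1 q.2)) := by
    intro t ht
    apply Measurable.mul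
    · exact ENNReal.measurable_ofReal.comp (hHT.div (hZmeas.comp measurable_fst))
    · exact (measurable_one.indicator ht).comp (measurable_snd.prodMk hT)
  have hker : Measurable (fun x₀ => (μ x₀).map (fun a => (a, T x₀ a))) := by
    apply Measure.measurable_of_measurable_coe
    intro t ht
    simp_rw [key t ht]
    exact Measurable.lintegral_prod_right (hGmeas t ht)
  -- main computation
  refine Measure.ext fun s hs => ?_
  have hκs : ∀ s' : Set ((Fin m → ℝ) × ℝ), MeasurableSet s' →
      Measurable (fun x₀ : ℝ => ((μ x₀).map (fun a => (a, T x₀ a))) s') :=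
    fun s' hs' => (Measure.measurable_coe hs').comp hker
  rw [hL, Measure.bind_apply hs hker.aemeasurable, hν,
    lintegral_withDensity_eq_lintegral_mul _ hp₀.ennreal_ofReal (hκs s hs)]
  simp only [Pi.mul_apply]
  have step1 : ∫⁻ x₀, (ENNReal.ofReal (p₀ x₀))
        * ((μ x₀).map (fun a => (a, T x₀ a))) s
      = ∫⁻ x₀, ∫⁻ a, ENNReal.ofReal (p₀ x₀)
          * (ENNReal.ofReal (Real.exp (-β * H (a, T x₀ a)) / Z x₀)
            * s.indicator 1 (a, T x₀ a)) := by
    apply lintegral_congr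
    intro x₀
    rw [key s hs x₀]
    exact (lintegral_const_mul _ ((hGmeas s hs).comp
      (measurable_const.prodMk measurable_id))).symm
  rw [step1]
  have huncurry : Measurable (fun q : ℝ × (Fin m → ℝ) =>
      ENNReal.ofReal (p₀ q.1) * (ENNReal.ofReal (Real.exp (-β * H (q.2, T q.1 q.2)) / Z q.1)
        * s.indicator 1 (q.2, T q.1 q.2))) :=
    (hp₀.comp measurable_fst).ennreal_ofReal.mul (hGmeas s hs)
  rw [lintegral_lintegral_swap huncurry.aemeasurable]
  have claimB : ∀ a : Fin m → ℝ,
      ∫⁻ x₀, ENNReal.ofReal (p₀ x₀) * (ENNReal.ofReal (Real.exp (-β * H (a, T x₀ a)) / Z x₀)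
          * s.indicator 1 (a, T x₀ a))
        = ∫⁻ b, F (a, b) * s.indicator 1 (a, b) := by
    intro a
    have hderiv : ∀ x ∈ (Set.univ : Set ℝ), HasDerivWithinAt (fun x => T x a)
        (deriv (fun x => T x a) x) Set.univ x := fun x _ =>
      (((hTsmooth a).differentiable one_ne_zero) x).hasDerivAt.hasDerivWithinAt
    have himg : (fun x => T x a) '' Set.univ = Set.univ := by
      rw [Set.image_univ]; exact (hTbij a).2.range_eq
    have hcov := my_lintegral_image_eq_lintegral_abs_deriv_mul MeasurableSet.univ hderiv
      ((hTbij a).1.injOn) (fun b => F (a, b) * s.indicator 1 (a, b))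
    rw [himg] at hcov
    simp only [Measure.restrict_univ] at hcov
    rw [hcov]
    apply lintegral_congr
    intro x
    have hx : Tinv a (T x a) = x := hTinvL a x
    have hepos : 0 < Real.exp (-β * H (a, T x a)) := Real.exp_pos _
    have hdne : deriv (fun x => T x a) x ≠ 0 := hT' a x
    have hdpos : 0 < |deriv (fun x => T x a) x| := abs_pos.2 hdne
    have hzpos := hZpos x
    simp only [hFdef, hx]
    rw [← mul_assoc, ← mul_assoc]
    congr 1
    rcases le_or_gt (p₀ x) 0 with hp | hp
    · have h1 : p₀ x * Real.exp (-β * H (a, T x a))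
          / (|deriv (fun x => T x a) x| * Z x) ≤ 0 :=
        div_nonpos_of_nonpos_of_nonneg
          (mul_nonpos_of_nonpos_of_nonneg hp hepos.le) (by positivity)
      rw [ENNReal.ofReal_of_nonpos h1, ENNReal.ofReal_of_nonpos hp, mul_zero, zero_mul]
    · rw [← ENNReal.ofReal_mul (abs_nonneg _), ← ENNReal.ofReal_mul hp.le]
      congr 1
      field_simp
  rw [lintegral_congr claimB]
  have hprod : Measurable (fun p : (Fin m → ℝ) × ℝ => F p * s.indicator 1 p) :=
    hFmeas.mul (measurable_one.indicator hs)
  rw [← lintegral_prod _ hprod.aemeasurable, ← Measure.volume_eq_prod,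
    withDensity_apply _ hs, ← lintegral_indicator hs]
  apply lintegral_congr
  intro p
  simp only [Set.indicator_apply]
  by_cases hp : p ∈ s
  · simp [hp]
  · simp [hp]
end

section
/- Under the hypotheses of the log-evidence decomposition (σ-finite measure spaces (W, μ_W), (Θ, μ_Θ), (X, μ_X); nonnegative measurable joint density ρ on W × Θ × X with 0 < Z_y := ∫∫∫ ρ < ∞ and marginal ρ_A(w, θ) := ∫_X ρ; probability densities q_φ, q_ψ, q_χ on W, Θ, X with the positivity and integrability assumptions of that decomposition), the Kullback–Leibler divergence of the guide from the marginal posterior is bounded above by the evidence gap: KL( q_φ ⊗ q_ψ ‖ ρ_A / Z_y ) ≤ log Z_y − ELBO, where ELBO := ∫∫∫ q_φ q_ψ q_χ log( ρ / (q_φ q_ψ q_χ) ). Consequently, maximizing the ELBO over the variational parameters minimizes an upper bound of the Kullback–Leibler divergence KL( q_φ(w) q_ψ(θ) ‖ p(w, θ | y) ). -/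
open MeasureTheory

/-- Proposition 2 (conclusion): under the hypotheses of the log-evidence
decomposition, the Kullback–Leibler divergence of the variational guide
`q_φ ⊗ q_ψ` from the marginal posterior `p(w, θ | y) = ρ_A / Z_y` is bounded
above by the evidence gap `log Z_y − ELBO`; hence maximizing the ELBO
minimizes an upper bound of this KL divergence. -/
theorem kl_le_log_evidence_sub_elbo
    {W Θ X : Type*} [MeasurableSpace W] [MeasurableSpace Θ] [MeasurableSpace X]
    (μW : Measure W) (μΘ : Measure Θ) (μX : Measure X)
    [SigmaFinite μW] [SigmaFinite μΘ] [SigmaFinite μX]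
    (ρ : W × Θ × X → ℝ) (hρmeas : Measurable ρ) (hρnn : ∀ p, 0 ≤ ρ p)
    (hρint : Integrable ρ (μW.prod (μΘ.prod μX)))
    (Zy : ℝ) (hZy : Zy = ∫ p, ρ p ∂(μW.prod (μΘ.prod μX))) (hZpos : 0 < Zy)
    (ρA : W × Θ → ℝ) (hρA : ∀ w θ, ρA (w, θ) = ∫ x, ρ (w, θ, x) ∂μX)
    (qφ : W → ℝ) (qψ : Θ → ℝ) (qχ : X → ℝ)
    (hqφmeas : Measurable qφ) (hqψmeas : Measurable qψ) (hqχmeas : Measurable qχ)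
    (hqφnn : ∀ w, 0 ≤ qφ w) (hqψnn : ∀ θ, 0 ≤ qψ θ) (hqχnn : ∀ x, 0 ≤ qχ x)
    (hqφ1 : ∫ w, qφ w ∂μW = 1) (hqψ1 : ∫ θ, qψ θ ∂μΘ = 1)
    (hqχ1 : ∫ x, qχ x ∂μX = 1)
    (hρpos : ∀ᵐ p ∂((μW.prod (μΘ.prod μX)).withDensity
      (fun p => ENNReal.ofReal (qφ p.1 * qψ p.2.1 * qχ p.2.2))), 0 < ρ p)
    (hρApos : ∀ᵐ p ∂((μW.prod μΘ).withDensity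
      (fun p => ENNReal.ofReal (qφ p.1 * qψ p.2))), 0 < ρA p)
    (hint1 : Integrable (fun p : W × Θ × X => qφ p.1 * qψ p.2.1 * qχ p.2.2 *
      Real.log (ρ p / (qφ p.1 * qψ p.2.1 * qχ p.2.2))) (μW.prod (μΘ.prod μX)))
    (hint2 : Integrable (fun p : W × Θ => qφ p.1 * qψ p.2 *
      Real.log (qφ p.1 * qψ p.2 * Zy / ρA p)) (μW.prod μΘ))
    (hint3 : Integrable (fun p : W × Θ × X => qφ p.1 * qψ p.2.1 * qχ p.2.2 *
      Real.log (qχ p.2.2 * ρA (p.1, p.2.1) / ρ p)) (μW.prod (μΘ.prod μX)))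
    (ELBO : ℝ)
    (hELBO : ELBO = ∫ p, qφ p.1 * qψ p.2.1 * qχ p.2.2 *
      Real.log (ρ p / (qφ p.1 * qψ p.2.1 * qχ p.2.2)) ∂(μW.prod (μΘ.prod μX))) :
    (∫ p, qφ p.1 * qψ p.2 *
        Real.log (qφ p.1 * qψ p.2 / (ρA p / Zy)) ∂(μW.prod μΘ))
      ≤ Real.log Zy - ELBO := by
  set ν3 : Measure (W × Θ × X) := μW.prod (μΘ.prod μX) with hν3
  set ν2 : Measure (W × Θ) := μW.prod μΘ with hν2
  haveI : SigmaFinite ν2 := inferInstanceAs (SigmaFinite (μW.prod μΘ))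
  haveI : SigmaFinite ν3 := inferInstanceAs (SigmaFinite (μW.prod (μΘ.prod μX)))
  -- integrability of the variational densities
  have hIφ : Integrable qφ μW := by
    by_contra h; rw [integral_undef h] at hqφ1; norm_num at hqφ1
  have hIψ : Integrable qψ μΘ := by
    by_contra h; rw [integral_undef h] at hqψ1; norm_num at hqψ1
  have hIχ : Integrable qχ μX := by
    by_contra h; rw [integral_undef h] at hqχ1; norm_num at hqχ1
  -- nonnegativity of the marginal density
  have hρAnn : ∀ q : W × Θ, 0 ≤ ρA q := by
    rintro ⟨w, θ⟩
    rw [hρA]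
    exact integral_nonneg fun x => hρnn _
  -- the associativity measurable equivalence
  set e : (W × Θ) × X ≃ᵐ W × Θ × X := MeasurableEquiv.prodAssoc with he
  have mp : MeasurePreserving e (ν2.prod μX) ν3 := measurePreserving_prodAssoc μW μΘ μX
  have heval : ∀ (q : W × Θ) (x : X), e (q, x) = (q.1, q.2, x) := fun q x => rfl
  -- measurability of ρA
  have hρAsm : StronglyMeasurable ρA := by
    have h1 : StronglyMeasurable fun q : W × Θ => ∫ x, ρ (e (q, x)) ∂μX :=
      (hρmeas.comp e.measurable).stronglyMeasurable.integral_prod_right'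
    have h2 : ρA = fun q : W × Θ => ∫ x, ρ (e (q, x)) ∂μX := by
      funext q
      simp only [heval]
      exact hρA q.1 q.2
    rw [h2]; exact h1
  have hρAm : Measurable ρA := hρAsm.measurable
  -- positivity a.e. (transferred from the withDensity measures)
  have hdm3 : Measurable fun p : W × Θ × X =>
      ENNReal.ofReal (qφ p.1 * qψ p.2.1 * qχ p.2.2) :=
    (((hqφmeas.comp measurable_fst).mul
      (hqψmeas.comp (measurable_fst.comp measurable_snd))).mul
      (hqχmeas.comp (measurable_snd.comp measurable_snd))).ennreal_ofReal
  have hdm2 : Measurable fun q : W × Θ => ENNReal.ofReal (qφ q.1 * qψ q.2) :=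
    ((hqφmeas.comp measurable_fst).mul (hqψmeas.comp measurable_snd)).ennreal_ofReal
  have hE1 : ∀ᵐ p ∂ν3, qφ p.1 * qψ p.2.1 * qχ p.2.2 ≠ 0 → 0 < ρ p := by
    filter_upwards [(ae_withDensity_iff hdm3).1 hρpos] with p hp hne
    refine hp ?_
    rw [Ne, ENNReal.ofReal_eq_zero, not_le]
    exact lt_of_le_of_ne
      (mul_nonneg (mul_nonneg (hqφnn _) (hqψnn _)) (hqχnn _)) (Ne.symm hne)
  have hE2' : ∀ᵐ q ∂ν2, qφ q.1 * qψ q.2 ≠ 0 → 0 < ρA q := by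
    filter_upwards [(ae_withDensity_iff hdm2).1 hρApos] with q hq hne
    refine hq ?_
    rw [Ne, ENNReal.ofReal_eq_zero, not_le]
    exact lt_of_le_of_ne (mul_nonneg (hqφnn _) (hqψnn _)) (Ne.symm hne)
  have hπm : Measurable fun p : W × Θ × X => (p.1, p.2.1) :=
    measurable_fst.prodMk (measurable_fst.comp measurable_snd)
  have hE2 : ∀ᵐ p ∂ν3, qφ p.1 * qψ p.2.1 ≠ 0 → 0 < ρA (p.1, p.2.1) := by
    set T : Set (W × Θ) := {q | ¬ (qφ q.1 * qψ q.2 ≠ 0 → 0 < ρA q)} with hT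
    have hT0 : ν2 T = 0 := ae_iff.mp hE2'
    have hTmeas : MeasurableSet T := by
      have hTeq : T = {q : W × Θ | qφ q.1 * qψ q.2 ≠ 0} ∩ {q : W × Θ | ρA q ≤ 0} := by
        ext q
        simp only [hT, Set.mem_setOf_eq, Set.mem_inter_iff, Classical.not_imp, not_lt]
      rw [hTeq]
      exact ((((hqφmeas.comp measurable_fst).mul
        (hqψmeas.comp measurable_snd)) (measurableSet_singleton 0)).compl).inter
        (hρAm measurableSet_Iic)
    have hpre : e ⁻¹' ((fun p : W × Θ × X => (p.1, p.2.1)) ⁻¹' T) = T ×ˢ Set.univ := by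
      ext ⟨q, x⟩
      simp [heval]
    have h3 : ν3 ((fun p : W × Θ × X => (p.1, p.2.1)) ⁻¹' T) = 0 := by
      rw [← mp.measure_preimage_equiv, hpre, Measure.prod_prod, hT0, zero_mul]
    rw [ae_iff]
    exact measure_mono_null (fun p hp => hp) h3
  -- the product density on the triple space
  have hf3int : Integrable (fun p : W × Θ × X =>
      qφ p.1 * qψ p.2.1 * qχ p.2.2) ν3 := by
    have := hIφ.mul_prod (hIψ.mul_prod hIχ)
    simpa [mul_assoc] using this
  have hf3one : ∫ p, qφ p.1 * qψ p.2.1 * qχ p.2.2 ∂ν3 = 1 := by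
    have h1 : ∫ p : W × Θ × X, qφ p.1 *
        ((fun q : Θ × X => qψ q.1 * qχ q.2) p.2) ∂(μW.prod (μΘ.prod μX))
        = (∫ w, qφ w ∂μW) * ∫ q : Θ × X, qψ q.1 * qχ q.2 ∂(μΘ.prod μX) :=
      integral_prod_mul (μ := μW) (ν := μΘ.prod μX) qφ (fun q : Θ × X => qψ q.1 * qχ q.2)
    have h2 : ∫ q : Θ × X, qψ q.1 * qχ q.2 ∂(μΘ.prod μX)
        = (∫ θ, qψ θ ∂μΘ) * ∫ x, qχ x ∂μX := integral_prod_mul (μ := μΘ) (ν := μX) qψ qχ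
    rw [hν3]
    simp only [mul_assoc]
    rw [h1, h2, hqφ1, hqψ1, hqχ1]; norm_num
  -- the pointwise log-evidence decomposition, a.e.
  have hident : (fun p : W × Θ × X => qφ p.1 * qψ p.2.1 * qχ p.2.2 *
        Real.log (qφ p.1 * qψ p.2.1 * Zy / ρA (p.1, p.2.1)))
      =ᵐ[ν3] fun p => qφ p.1 * qψ p.2.1 * qχ p.2.2 * Real.log Zy
        - qφ p.1 * qψ p.2.1 * qχ p.2.2 *
            Real.log (qχ p.2.2 * ρA (p.1, p.2.1) / ρ p)
        - qφ p.1 * qψ p.2.1 * qχ p.2.2 *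
            Real.log (ρ p / (qφ p.1 * qψ p.2.1 * qχ p.2.2)) := by
    filter_upwards [hE1, hE2] with p hp1 hp2
    by_cases h0 : qφ p.1 * qψ p.2.1 * qχ p.2.2 = 0
    · simp [h0]
    · have h1 : qφ p.1 ≠ 0 := fun h => h0 (by simp [h])
      have h2 : qψ p.2.1 ≠ 0 := fun h => h0 (by simp [h])
      have h3 : qχ p.2.2 ≠ 0 := fun h => h0 (by simp [h])
      have hρp : 0 < ρ p := hp1 h0
      have hρAp : 0 < ρA (p.1, p.2.1) := hp2 (mul_ne_zero h1 h2)
      have hφ : 0 < qφ p.1 := lt_of_le_of_ne (hqφnn _) (Ne.symm h1)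
      have hψ : 0 < qψ p.2.1 := lt_of_le_of_ne (hqψnn _) (Ne.symm h2)
      have hχ : 0 < qχ p.2.2 := lt_of_le_of_ne (hqχnn _) (Ne.symm h3)
      have ha : 0 < qφ p.1 * qψ p.2.1 * Zy / ρA (p.1, p.2.1) :=
        div_pos (mul_pos (mul_pos hφ hψ) hZpos) hρAp
      have hb : 0 < qχ p.2.2 * ρA (p.1, p.2.1) / ρ p :=
        div_pos (mul_pos hχ hρAp) hρp
      have hd : 0 < ρ p / (qφ p.1 * qψ p.2.1 * qχ p.2.2) :=
        div_pos hρp (mul_pos (mul_pos hφ hψ) hχ)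
      have hprod : (qφ p.1 * qψ p.2.1 * Zy / ρA (p.1, p.2.1))
          * (qχ p.2.2 * ρA (p.1, p.2.1) / ρ p)
          * (ρ p / (qφ p.1 * qψ p.2.1 * qχ p.2.2)) = Zy := by
        field_simp
      have hlog : Real.log (qφ p.1 * qψ p.2.1 * Zy / ρA (p.1, p.2.1))
          + Real.log (qχ p.2.2 * ρA (p.1, p.2.1) / ρ p)
          + Real.log (ρ p / (qφ p.1 * qψ p.2.1 * qχ p.2.2)) = Real.log Zy := by
        rw [← Real.log_mul ha.ne' hb.ne', ← Real.log_mul (mul_pos ha hb).ne' hd.ne',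
          hprod]
      linear_combination (qφ p.1 * qψ p.2.1 * qχ p.2.2) * hlog
  -- integrating the decomposition
  have hkey : ∫ p, qφ p.1 * qψ p.2.1 * qχ p.2.2 *
        Real.log (qφ p.1 * qψ p.2.1 * Zy / ρA (p.1, p.2.1)) ∂ν3
      = Real.log Zy - (∫ p, qφ p.1 * qψ p.2.1 * qχ p.2.2 *
          Real.log (qχ p.2.2 * ρA (p.1, p.2.1) / ρ p) ∂ν3) - ELBO := by
    have hAB : Integrable (fun p : W × Θ × X =>
        qφ p.1 * qψ p.2.1 * qχ p.2.2 * Real.log Zy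
          - qφ p.1 * qψ p.2.1 * qχ p.2.2 *
              Real.log (qχ p.2.2 * ρA (p.1, p.2.1) / ρ p)) ν3 :=
      (hf3int.mul_const _).sub hint3
    rw [integral_congr_ae hident, integral_sub hAB hint1,
      integral_sub (hf3int.mul_const _) hint3, integral_mul_const, hf3one,
      one_mul, hELBO]
  -- Fubini: the triple integral of the KL term reduces to the double integral
  have hT1eq : ∫ p, qφ p.1 * qψ p.2.1 * qχ p.2.2 *
        Real.log (qφ p.1 * qψ p.2.1 * Zy / ρA (p.1, p.2.1)) ∂ν3
      = ∫ q, qφ q.1 * qψ q.2 * Real.log (qφ q.1 * qψ q.2 * Zy / ρA q) ∂ν2 := by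
    rw [← mp.integral_comp e.measurableEmbedding]
    have hfun : (fun z : (W × Θ) × X => qφ (e z).1 * qψ (e z).2.1 * qχ (e z).2.2 *
          Real.log (qφ (e z).1 * qψ (e z).2.1 * Zy / ρA ((e z).1, (e z).2.1)))
        = fun z : (W × Θ) × X =>
            (fun q : W × Θ => qφ q.1 * qψ q.2 *
              Real.log (qφ q.1 * qψ q.2 * Zy / ρA q)) z.1 * qχ z.2 := by
      funext z
      show qφ z.1.1 * qψ z.1.2 * qχ z.2 *
          Real.log (qφ z.1.1 * qψ z.1.2 * Zy / ρA (z.1.1, z.1.2)) = _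
      rw [Prod.mk.eta]
      ring
    rw [hfun, hν2, integral_prod_mul (μ := μW.prod μΘ) (ν := μX)
      (fun q : W × Θ => qφ q.1 * qψ q.2 *
        Real.log (qφ q.1 * qψ q.2 * Zy / ρA q)) qχ, hqχ1, mul_one]
  -- nonnegativity of the inner KL term via log x ≤ x - 1
  have hgnn : ∀ p : W × Θ × X,
      0 ≤ qφ p.1 * qψ p.2.1 * ρ p / ρA (p.1, p.2.1) := fun p =>
    div_nonneg (mul_nonneg (mul_nonneg (hqφnn _) (hqψnn _)) (hρnn _)) (hρAnn _)
  have hgm : Measurable fun p : W × Θ × X =>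
      qφ p.1 * qψ p.2.1 * ρ p / ρA (p.1, p.2.1) :=
    (((hqφmeas.comp measurable_fst).mul
      (hqψmeas.comp (measurable_fst.comp measurable_snd))).mul hρmeas).div
      (hρAm.comp hπm)
  have hρint' : Integrable (fun z : (W × Θ) × X => ρ (e z)) (ν2.prod μX) :=
    (mp.integrable_comp_emb e.measurableEmbedding).2 hρint
  have hslice : ∀ᵐ q ∂ν2, Integrable (fun x => ρ (q.1, q.2, x)) μX := by
    filter_upwards [hρint'.prod_right_ae] with q hq
    exact hq
  have hglint : ∫⁻ p, ENNReal.ofReal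
      (qφ p.1 * qψ p.2.1 * ρ p / ρA (p.1, p.2.1)) ∂ν3 ≤ 1 := by
    rw [← mp.lintegral_comp hgm.ennreal_ofReal]
    have hgem : AEMeasurable (fun z : (W × Θ) × X => ENNReal.ofReal
        (qφ (e z).1 * qψ (e z).2.1 * ρ (e z) / ρA ((e z).1, (e z).2.1)))
        (ν2.prod μX) :=
      ((hgm.ennreal_ofReal).comp e.measurable).aemeasurable
    rw [lintegral_prod _ hgem]
    have hinner : ∀ᵐ q ∂ν2, (∫⁻ x, ENNReal.ofReal
        (qφ q.1 * qψ q.2 * ρ (q.1, q.2, x) / ρA (q.1, q.2)) ∂μX)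
        ≤ ENNReal.ofReal (qφ q.1 * qψ q.2) := by
      filter_upwards [hslice] with q hq
      have hc : 0 ≤ qφ q.1 * qψ q.2 / ρA q :=
        div_nonneg (mul_nonneg (hqφnn _) (hqψnn _)) (hρAnn _)
      have hcongr : ∀ x, ENNReal.ofReal
          (qφ q.1 * qψ q.2 * ρ (q.1, q.2, x) / ρA (q.1, q.2))
          = ENNReal.ofReal (qφ q.1 * qψ q.2 / ρA q) *
              ENNReal.ofReal (ρ (q.1, q.2, x)) := by
        intro x
        rw [← ENNReal.ofReal_mul hc]
        congr 1
        rw [← Prod.mk.eta (p := q)]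
        rw [div_mul_eq_mul_div]
      calc (∫⁻ x, ENNReal.ofReal
            (qφ q.1 * qψ q.2 * ρ (q.1, q.2, x) / ρA (q.1, q.2)) ∂μX)
          = ENNReal.ofReal (qφ q.1 * qψ q.2 / ρA q) *
              ∫⁻ x, ENNReal.ofReal (ρ (q.1, q.2, x)) ∂μX := by
            simp only [hcongr]
            exact lintegral_const_mul _
              ((hρmeas.comp (measurable_const.prodMk
                (measurable_const.prodMk measurable_id))).ennreal_ofReal)
        _ = ENNReal.ofReal (qφ q.1 * qψ q.2 / ρA q) * ENNReal.ofReal (ρA q) := by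
            rw [← ofReal_integral_eq_lintegral_ofReal hq
              (Filter.Eventually.of_forall fun x => hρnn _)]
            congr 1
            rw [← Prod.mk.eta (p := q), hρA]
        _ ≤ ENNReal.ofReal (qφ q.1 * qψ q.2) := by
            rw [← ENNReal.ofReal_mul hc]
            refine ENNReal.ofReal_le_ofReal ?_
            by_cases h : ρA q = 0
            · simpa [h] using mul_nonneg (hqφnn _) (hqψnn _)
            · rw [div_mul_cancel₀ _ h]
    have hone : ∫⁻ q : W × Θ, ENNReal.ofReal (qφ q.1 * qψ q.2) ∂ν2 = 1 := by
      have hsplit : ∀ q : W × Θ, ENNReal.ofReal (qφ q.1 * qψ q.2)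
          = ENNReal.ofReal (qφ q.1) * ENNReal.ofReal (qψ q.2) := fun q =>
        ENNReal.ofReal_mul (hqφnn _)
      simp only [hsplit]
      rw [lintegral_prod_mul hqφmeas.ennreal_ofReal.aemeasurable
        hqψmeas.ennreal_ofReal.aemeasurable,
        ← ofReal_integral_eq_lintegral_ofReal hIφ
          (Filter.Eventually.of_forall hqφnn),
        ← ofReal_integral_eq_lintegral_ofReal hIψ
          (Filter.Eventually.of_forall hqψnn), hqφ1, hqψ1]
      simp
    exact le_trans (lintegral_mono_ae hinner) (le_of_eq hone)
  have hgint : Integrable (fun p : W × Θ × X =>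
      qφ p.1 * qψ p.2.1 * ρ p / ρA (p.1, p.2.1)) ν3 :=
    ⟨hgm.aestronglyMeasurable,
      (hasFiniteIntegral_iff_ofReal (Filter.Eventually.of_forall hgnn)).2
        (lt_of_le_of_lt hglint ENNReal.one_lt_top)⟩
  have hgle1 : ∫ p, qφ p.1 * qψ p.2.1 * ρ p / ρA (p.1, p.2.1) ∂ν3 ≤ 1 := by
    rw [integral_eq_lintegral_of_nonneg_ae (Filter.Eventually.of_forall hgnn)
      hgm.aestronglyMeasurable]
    have := ENNReal.toReal_mono ENNReal.one_ne_top hglint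
    simpa using this
  have hptw : (fun p : W × Θ × X => qφ p.1 * qψ p.2.1 * qχ p.2.2
        - qφ p.1 * qψ p.2.1 * qχ p.2.2 *
            Real.log (qχ p.2.2 * ρA (p.1, p.2.1) / ρ p))
      ≤ᵐ[ν3] fun p => qφ p.1 * qψ p.2.1 * ρ p / ρA (p.1, p.2.1) := by
    filter_upwards [hE1, hE2] with p hp1 hp2
    by_cases h0 : qφ p.1 * qψ p.2.1 * qχ p.2.2 = 0
    · simpa [h0] using hgnn p
    · have h1 : qφ p.1 ≠ 0 := fun h => h0 (by simp [h])
      have h2 : qψ p.2.1 ≠ 0 := fun h => h0 (by simp [h])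
      have h3 : qχ p.2.2 ≠ 0 := fun h => h0 (by simp [h])
      have hρp : 0 < ρ p := hp1 h0
      have hρAp : 0 < ρA (p.1, p.2.1) := hp2 (mul_ne_zero h1 h2)
      have hφ : 0 < qφ p.1 := lt_of_le_of_ne (hqφnn _) (Ne.symm h1)
      have hψ : 0 < qψ p.2.1 := lt_of_le_of_ne (hqψnn _) (Ne.symm h2)
      have hχ : 0 < qχ p.2.2 := lt_of_le_of_ne (hqχnn _) (Ne.symm h3)
      have hx : 0 < ρ p / (qχ p.2.2 * ρA (p.1, p.2.1)) :=
        div_pos hρp (mul_pos hχ hρAp)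
      have hkey2 := Real.log_le_sub_one_of_pos hx
      have hblog : Real.log (qχ p.2.2 * ρA (p.1, p.2.1) / ρ p)
          = - Real.log (ρ p / (qχ p.2.2 * ρA (p.1, p.2.1))) := by
        rw [← Real.log_inv, inv_div]
      have hgeq : qφ p.1 * qψ p.2.1 * ρ p / ρA (p.1, p.2.1)
          = qφ p.1 * qψ p.2.1 * qχ p.2.2 *
              (ρ p / (qχ p.2.2 * ρA (p.1, p.2.1))) := by
        field_simp
      have hc : 0 ≤ qφ p.1 * qψ p.2.1 * qχ p.2.2 :=
        mul_nonneg (mul_nonneg (hqφnn _) (hqψnn _)) (hqχnn _)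
      have hmul := mul_le_mul_of_nonneg_left hkey2 hc
      rw [mul_sub, mul_one] at hmul
      rw [hblog, hgeq]
      linarith
  have hC : 0 ≤ ∫ p, qφ p.1 * qψ p.2.1 * qχ p.2.2 *
      Real.log (qχ p.2.2 * ρA (p.1, p.2.1) / ρ p) ∂ν3 := by
    have hmono := integral_mono_ae (hf3int.sub hint3) hgint hptw
    have hsub : (∫ p, (qφ p.1 * qψ p.2.1 * qχ p.2.2
          - qφ p.1 * qψ p.2.1 * qχ p.2.2 *
              Real.log (qχ p.2.2 * ρA (p.1, p.2.1) / ρ p)) ∂ν3)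
        = (∫ p, qφ p.1 * qψ p.2.1 * qχ p.2.2 ∂ν3)
          - ∫ p, qφ p.1 * qψ p.2.1 * qχ p.2.2 *
              Real.log (qχ p.2.2 * ρA (p.1, p.2.1) / ρ p) ∂ν3 :=
      integral_sub hf3int hint3
    simp only [Pi.sub_apply] at hmono
    rw [hsub, hf3one] at hmono
    linarith
  calc (∫ q, qφ q.1 * qψ q.2 *
        Real.log (qφ q.1 * qψ q.2 / (ρA q / Zy)) ∂ν2)
      = ∫ q, qφ q.1 * qψ q.2 *
          Real.log (qφ q.1 * qψ q.2 * Zy / ρA q) ∂ν2 := by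
        simp only [div_div_eq_mul_div]
    _ = Real.log Zy - (∫ p, qφ p.1 * qψ p.2.1 * qχ p.2.2 *
          Real.log (qχ p.2.2 * ρA (p.1, p.2.1) / ρ p) ∂ν3) - ELBO := by
        rw [← hT1eq, hkey]
    _ ≤ Real.log Zy - ELBO := by linarith
end
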